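/- arXiv:1312.4524 — 6 statements merged into one kernel-verified Lean document; each statement's English description precedes it below -/
import Mathlib

section
/- A Boolean relation R ⊆ {0,1}^n is Horn (definable by a Horn CNF formula) if and only if R is closed under coordinate-wise conjunction: for all a, b ∈ R, the vector (a₁∧b₁, …, aₙ∧bₙ) is in R. -/
/-- A clause is a list of literals (variable, polarity); polarity `true` = positive literal. -/
def SatClause {n : ℕ} (a : Fin n → Bool) (c : List (Fin n × Bool)) : Prop :=
  ∃ l ∈ c, (if l.2 then a l.1 else !(a l.1)) = true

/-- A Horn clause has at most one positive literal. -/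
def IsHornClause {n : ℕ} (c : List (Fin n × Bool)) : Prop :=
  (c.filter (fun l => l.2)).length ≤ 1

/-!
A Horn clause has at most one positive literal, and a negative literal satisfied by `a` or `b`
is satisfied by `a ∧ b`; so each Horn clause is preserved by coordinate-wise conjunction.
Conversely, let `R` be closed under conjunction and `x ∉ R`. The meet `m` of the elements of `R`
above `x` lies in `R`, hence `m ≠ x`, and some coordinate has `m j = 1`, `x j = 0`. The clause
`⋁_{xᵢ = 1} ¬vᵢ ∨ v_j` holds on `R` (an element of `R` above `x` is above `m`) and fails at `x`;
when no element of `R` lies above `x`, drop `v_j`. These clauses, over all `x ∉ R`, define `R`.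
-/

lemma List.eq_of_mem_of_length_le_one {α : Type*} {l : List α} (h : l.length ≤ 1) {x y : α}
    (hx : x ∈ l) (hy : y ∈ l) : x = y := by
  match l with
  | [] => simp at hx
  | [_] => simp_all
  | _ :: _ :: _ => simp at h

variable {n : ℕ}

lemma satClause_iff {a : Fin n → Bool} {c : List (Fin n × Bool)} :
    SatClause a c ↔ ∃ l ∈ c, a l.1 = l.2 := by
  refine exists_congr fun l => and_congr_right fun _ => ?_
  cases l.2 <;> simp

lemma satClause_append {a : Fin n → Bool} {c d : List (Fin n × Bool)} :
    SatClause a (c ++ d) ↔ SatClause a c ∨ SatClause a d := by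
  simp only [satClause_iff, List.mem_append, or_and_right, exists_or]

lemma IsHornClause.satClause_inf {c : List (Fin n × Bool)} (hc : IsHornClause c)
    {a b : Fin n → Bool} (ha : SatClause a c) (hb : SatClause b c) : SatClause (a ⊓ b) c := by
  rw [satClause_iff] at *
  obtain ⟨la, hla, hal⟩ := ha
  obtain ⟨lb, hlb, hbl⟩ := hb
  cases hpa : la.2
  · exact ⟨la, hla, by simp [Pi.inf_apply, hal, hpa]⟩
  cases hpb : lb.2
  · exact ⟨lb, hlb, by simp [Pi.inf_apply, hbl, hpb]⟩
  have hab : la = lb :=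
    List.eq_of_mem_of_length_le_one hc (List.mem_filter.2 ⟨hla, hpa⟩) (List.mem_filter.2 ⟨hlb, hpb⟩)
  subst hab
  exact ⟨la, hla, by simp [Pi.inf_apply, hal, hbl, hpa]⟩

def negClause (x : Fin n → Bool) : List (Fin n × Bool) :=
  ((List.finRange n).filter fun i => x i).map fun i => (i, false)

lemma satClause_negClause {a x : Fin n → Bool} : SatClause a (negClause x) ↔ ¬ x ≤ a := by
  simp [satClause_iff, negClause, Pi.le_def, Bool.le_iff_imp]

lemma isHornClause_negClause_append (x : Fin n → Bool) (d : List (Fin n × Bool))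
    (hd : d.length ≤ 1) : IsHornClause (negClause x ++ d) := by
  have : (negClause x).filter (fun l => l.2) = [] := by simp [negClause]
  unfold IsHornClause
  rw [List.filter_append, this, List.nil_append]
  exact (List.length_filter_le _ _).trans hd

lemma exists_hornClause_separating {R : Set (Fin n → Bool)}
    (hR : ∀ a ∈ R, ∀ b ∈ R, a ⊓ b ∈ R) {x : Fin n → Bool} (hx : x ∉ R) :
    ∃ c, IsHornClause c ∧ (∀ a ∈ R, SatClause a c) ∧ ¬ SatClause x c := by
  classical
  set S := Finset.univ.filter fun a => a ∈ R ∧ x ≤ a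
  have hS {a} : a ∈ S ↔ a ∈ R ∧ x ≤ a := by simp [S]
  rcases S.eq_empty_or_nonempty with hSe | hSne
  · refine ⟨negClause x, by simpa using isHornClause_negClause_append x [] (by simp),
      fun a ha => ?_, ?_⟩
    · rw [satClause_negClause]
      exact fun hxa => by simpa [hSe] using hS.2 ⟨ha, hxa⟩
    · simp [satClause_negClause]
  set m := S.inf' hSne id
  have hmR : m ∈ R := Finset.inf'_mem R hR S hSne id fun a ha => (hS.1 ha).1
  have hxm : x ≤ m := Finset.le_inf' hSne id fun a ha => (hS.1 ha).2
  obtain ⟨j, hmj, hxj⟩ : ∃ j, m j = true ∧ x j = false := by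
    simpa [Pi.le_def, Bool.le_iff_imp] using fun hmx => hx (le_antisymm hxm hmx ▸ hmR)
  refine ⟨negClause x ++ [(j, true)], isHornClause_negClause_append x _ le_rfl,
    fun a ha => ?_, ?_⟩
  · rw [satClause_append, satClause_negClause, satClause_iff]
    refine or_iff_not_imp_left.2 fun hxa => ⟨(j, true), List.mem_singleton_self _, ?_⟩
    have hma : m ≤ a := Finset.inf'_le id (hS.2 ⟨ha, not_not.1 hxa⟩)
    exact Bool.le_iff_imp.1 (hma j) hmj
  · rw [satClause_append, satClause_negClause, satClause_iff]
    simp [hxj]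

lemma exists_hornFormula_of_separating (R : Set (Fin n → Bool))
    (h : ∀ x ∉ R, ∃ c, IsHornClause c ∧ (∀ a ∈ R, SatClause a c) ∧ ¬ SatClause x c) :
    ∃ φ : List (List (Fin n × Bool)),
      (∀ c ∈ φ, IsHornClause c) ∧ R = {a | ∀ c ∈ φ, SatClause a c} := by
  classical
  choose! clause hHorn hR hx using h
  refine ⟨(Finset.univ.filter (· ∉ R)).toList.map clause, ?_, ?_⟩
  · simpa using hHorn
  · ext a
    simp only [Set.mem_ofPred_eq, List.mem_map, Finset.mem_toList, Finset.mem_filter,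
      Finset.mem_univ, true_and, forall_exists_index, and_imp, forall_apply_eq_imp_iff₂]
    exact ⟨fun ha x hxR => hR x hxR a ha, fun h => by_contra fun ha => hx a ha (h a ha)⟩

theorem horn_iff_closed_under_and (n : ℕ) (R : Set (Fin n → Bool)) :
    (∃ φ : List (List (Fin n × Bool)),
        (∀ c ∈ φ, IsHornClause c) ∧
        R = {a | ∀ c ∈ φ, SatClause a c}) ↔
    (∀ a ∈ R, ∀ b ∈ R, (fun i => a i && b i) ∈ R) := by
  -- On `Fin n → Bool`, `a ⊓ b` unfolds to `fun i => a i && b i`.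
  constructor
  · rintro ⟨φ, hφ, rfl⟩ a ha b hb c hc
    exact (hφ c hc).satClause_inf (ha c hc) (hb c hc)
  · exact fun hR => exists_hornFormula_of_separating R fun x hx =>
      exists_hornClause_separating hR hx
end

section
/- A Boolean relation R ⊆ {0,1}^n is bijunctive (definable by a 2-CNF formula) if and only if R is closed under the coordinate-wise ternary majority operation MAJ(x,y,z) = (x∨y)∧(y∨z)∧(z∨x). -/
/-- The ternary Boolean majority operation. -/
def maj (x y z : Bool) : Bool := (x || y) && (y || z) && (z || x)

/-!
Majority is self-dual, so it commutes with evaluating a literal; and of three assignments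
satisfying a clause with at most two literals, two satisfy the same literal, which the majority
then satisfies too. Conversely, let `φ` consist of all clauses of length at most two satisfied by
every point of `R`. If `a` satisfies `φ`, then for every set `S` of at most two coordinates some
point of `R` agrees with `a` on `S` (otherwise the clause "differ from `a` somewhere on `S`" would
lie in `φ`). Closure under majority propagates this to every `S`: for distinct `i, j, k ∈ S`, the
majority of points agreeing with `a` on `S \ {i}`, `S \ {j}`, `S \ {k}` agrees with `a` on `S`.
Taking `S` to be everything gives `a ∈ R`.
-/

section Maj

variable (x y z s : Bool)

theorem maj_self_left : maj x x y = x := by revert x y; decide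

theorem maj_self_mid : maj x y x = x := by revert x y; decide

theorem maj_self_right : maj x y y = y := by revert x y; decide

theorem ite_maj_not :
    (if s then maj x y z else !maj x y z) =
      maj (if s then x else !x) (if s then y else !y) (if s then z else !z) := by
  revert s x y z; decide

end Maj

def MajClosed {ι : Type*} (R : Set (ι → Bool)) : Prop :=
  ∀ a ∈ R, ∀ b ∈ R, ∀ c ∈ R, (fun i => maj (a i) (b i) (c i)) ∈ R

theorem List.eq_or_eq_or_eq_of_length_le_two {α : Type*} {l : List α} (hl : l.length ≤ 2)
    {x y z : α} (hx : x ∈ l) (hy : y ∈ l) (hz : z ∈ l) : x = y ∨ y = z ∨ z = x := by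
  match l, hl with
  | [], _ => simp at hx
  | [u], _ => simp_all
  | [u, v], _ =>
    simp only [List.mem_cons, List.not_mem_nil, or_false] at hx hy hz
    rcases hx with rfl | rfl <;> rcases hy with rfl | rfl <;> rcases hz with rfl | rfl <;> simp

theorem satClause_maj {n : ℕ} {c : List (Fin n × Bool)} (hc : c.length ≤ 2)
    {a b d : Fin n → Bool} (ha : SatClause a c) (hb : SatClause b c) (hd : SatClause d c) :
    SatClause (fun i => maj (a i) (b i) (d i)) c := by
  obtain ⟨la, hla, ha⟩ := ha
  obtain ⟨lb, hlb, hb⟩ := hb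
  obtain ⟨ld, hld, hd⟩ := hd
  rcases List.eq_or_eq_or_eq_of_length_le_two hc hla hlb hld with rfl | rfl | rfl
  · exact ⟨la, hla, by simp only [ite_maj_not]; rw [ha, hb, maj_self_left]⟩
  · exact ⟨lb, hlb, by simp only [ite_maj_not]; rw [hb, hd, maj_self_right]⟩
  · exact ⟨ld, hld, by simp only [ite_maj_not]; rw [ha, hd, maj_self_mid]⟩

theorem majClosed_setOf_satClause {n : ℕ} {φ : List (List (Fin n × Bool))}
    (hφ : ∀ c ∈ φ, c.length ≤ 2) : MajClosed {a | ∀ c ∈ φ, SatClause a c} :=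
  fun _ ha _ hb _ hd c hc => satClause_maj (hφ c hc) (ha c hc) (hb c hc) (hd c hc)

theorem MajClosed.exists_eqOn {ι : Type*} {R : Set (ι → Bool)} (hR : MajClosed R)
    {x : ι → Bool} (h2 : ∀ S : Finset ι, S.card ≤ 2 → ∃ b ∈ R, Set.EqOn b x S)
    (S : Finset ι) : ∃ b ∈ R, Set.EqOn b x S := by
  classical
  induction S using Finset.strongInduction with
  | H S ih =>
  rcases le_or_gt S.card 2 with hS | hS
  · exact h2 S hS
  obtain ⟨i, hi, j, hj, k, hk, hij, hik, hjk⟩ := Finset.two_lt_card.1 hS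
  obtain ⟨b₁, hb₁, e₁⟩ := ih _ (Finset.erase_ssubset hi)
  obtain ⟨b₂, hb₂, e₂⟩ := ih _ (Finset.erase_ssubset hj)
  obtain ⟨b₃, hb₃, e₃⟩ := ih _ (Finset.erase_ssubset hk)
  refine ⟨_, hR _ hb₁ _ hb₂ _ hb₃, fun m hm => ?_⟩
  have agree {b : ι → Bool} {l : ι} (e : Set.EqOn b x ↑(S.erase l)) (hml : m ≠ l) :
      b m = x m :=
    e (Finset.mem_coe.2 (Finset.mem_erase.2 ⟨hml, hm⟩))
  show maj (b₁ m) (b₂ m) (b₃ m) = x m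
  by_cases hmi : m = i
  · subst hmi
    rw [agree e₂ hij, agree e₃ hik, maj_self_right]
  by_cases hmj : m = j
  · subst hmj
    rw [agree e₁ hmi, agree e₃ hjk, maj_self_mid]
  · rw [agree e₁ hmi, agree e₂ hmj, maj_self_left]

open Classical in
noncomputable def impliedTwoClauses {n : ℕ} (R : Set (Fin n → Bool)) :
    List (List (Fin n × Bool)) :=
  (Finset.univ.filter fun C : Finset (Fin n × Bool) =>
    C.card ≤ 2 ∧ ∀ b ∈ R, SatClause b C.toList).toList.map Finset.toList

section ImpliedTwoClauses

variable {n : ℕ} {R : Set (Fin n → Bool)}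

theorem length_le_two_of_mem_impliedTwoClauses {c : List (Fin n × Bool)}
    (hc : c ∈ impliedTwoClauses R) : c.length ≤ 2 := by
  classical
  simp only [impliedTwoClauses, List.mem_map, Finset.mem_toList, Finset.mem_filter] at hc
  obtain ⟨C, ⟨-, hC, -⟩, rfl⟩ := hc
  simpa using hC

theorem toList_mem_impliedTwoClauses {C : Finset (Fin n × Bool)} (hC : C.card ≤ 2)
    (hR : ∀ b ∈ R, SatClause b C.toList) : C.toList ∈ impliedTwoClauses R := by
  classical
  simp only [impliedTwoClauses, List.mem_map, Finset.mem_toList, Finset.mem_filter]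
  exact ⟨C, ⟨Finset.mem_univ _, hC, hR⟩, rfl⟩

theorem subset_setOf_satClause_impliedTwoClauses :
    R ⊆ {a | ∀ c ∈ impliedTwoClauses R, SatClause a c} := by
  classical
  intro b hb c hc
  simp only [impliedTwoClauses, List.mem_map, Finset.mem_toList, Finset.mem_filter] at hc
  obtain ⟨C, ⟨-, -, hC⟩, rfl⟩ := hc
  exact hC b hb

theorem exists_eqOn_of_satClause_impliedTwoClauses {a : Fin n → Bool}
    (ha : ∀ c ∈ impliedTwoClauses R, SatClause a c) {S : Finset (Fin n)} (hS : S.card ≤ 2) :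
    ∃ b ∈ R, Set.EqOn b a S := by
  classical
  by_contra! h
  set C := S.image fun i => (i, !a i)
  have sat_iff (b : Fin n → Bool) : SatClause b C.toList ↔ ¬Set.EqOn b a S := by
    simp only [SatClause, C, Finset.mem_toList, Finset.mem_image, Set.EqOn, Finset.mem_coe,
      not_forall]
    constructor
    · rintro ⟨_, ⟨i, hi, rfl⟩, hb⟩
      exact ⟨i, hi, by cases hai : a i <;> simp_all⟩
    · rintro ⟨i, hi, hb⟩
      exact ⟨_, ⟨i, hi, rfl⟩, by cases hai : a i <;> simp_all⟩
  have hC : C.toList ∈ impliedTwoClauses R :=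
    toList_mem_impliedTwoClauses (Finset.card_image_le.trans hS) fun b hb => (sat_iff b).2 (h b hb)
  exact (sat_iff a).1 (ha _ hC) (Set.eqOn_refl _ _)

end ImpliedTwoClauses

theorem bijunctive_iff_closed_under_maj (n : ℕ) (R : Set (Fin n → Bool)) :
    (∃ φ : List (List (Fin n × Bool)),
        (∀ c ∈ φ, c.length ≤ 2) ∧
        R = {a | ∀ c ∈ φ, SatClause a c}) ↔
    (∀ a ∈ R, ∀ b ∈ R, ∀ c ∈ R, (fun i => maj (a i) (b i) (c i)) ∈ R) := by
  constructor
  · rintro ⟨φ, hφ, rfl⟩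
    exact majClosed_setOf_satClause hφ
  · intro hR
    refine ⟨impliedTwoClauses R, fun c => length_le_two_of_mem_impliedTwoClauses,
      subset_setOf_satClause_impliedTwoClauses.antisymm fun a ha => ?_⟩
    obtain ⟨b, hb, hba⟩ := MajClosed.exists_eqOn hR
      (fun S hS => exists_eqOn_of_satClause_impliedTwoClauses ha hS) Finset.univ
    rwa [show b = a from funext fun i => hba (by simp)] at hb
end

section
/- For the 4-ary relation R = {0000, 0100, 1100, 0011, 1011}, each of the two connected components {0000,0100,1100} and {0011,1011} of its solution graph is closed under the coordinate-wise majority operation MAJ, but the 3-ary relation R' = {000,010,110,001,101} obtained from R by identifying the third and fourth variables has a connected component that is not closed under MAJ (indeed MAJ(110,000,101) = 100 ∉ R'). -/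
/-- Reachability in the solution graph of `S`: steps between elements of `S`
at Hamming distance 1. -/
def Reach {ι : Type*} [Fintype ι] (S : Set (ι → Bool)) : (ι → Bool) → (ι → Bool) → Prop :=
  Relation.ReflTransGen (fun u v => u ∈ S ∧ v ∈ S ∧ hammingDist u v = 1)

/-!
Each component of `G(R)` is a chain in the coordinatewise order, and on a chain `MAJ` returns the
middle element, so it stays in the component; the two components are at Hamming distance at least 2,
so no path crosses between them. Identifying the last two variables makes `000` and `001` adjacent,
which merges the images of the two components into one containing `110` and `101` but not
`MAJ(110, 000, 101) = 100`, the image of `1000 ∉ R`.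
-/

theorem maj_swap_left (x y z : Bool) : maj x y z = maj y x z := by
  cases x <;> cases y <;> cases z <;> rfl

theorem maj_swap_right (x y z : Bool) : maj x y z = maj x z y := by
  cases x <;> cases y <;> cases z <;> rfl

theorem maj_eq_of_between {x y z : Bool} (h : (x ≤ y ∧ y ≤ z) ∨ (z ≤ y ∧ y ≤ x)) :
    maj x y z = y := by
  revert h
  cases x <;> cases y <;> cases z <;> decide

section Vectors

variable {ι : Type*}

def majVec (a b c : ι → Bool) : ι → Bool := fun i => maj (a i) (b i) (c i)

def IsMajClosed (S : Set (ι → Bool)) : Prop :=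
  ∀ a ∈ S, ∀ b ∈ S, ∀ c ∈ S, majVec a b c ∈ S

theorem majVec_swap_left (a b c : ι → Bool) : majVec a b c = majVec b a c :=
  funext fun i => maj_swap_left (a i) (b i) (c i)

theorem majVec_swap_right (a b c : ι → Bool) : majVec a b c = majVec a c b :=
  funext fun i => maj_swap_right (a i) (b i) (c i)

theorem majVec_eq_of_between {a b c : ι → Bool} (h : (a ≤ b ∧ b ≤ c) ∨ (c ≤ b ∧ b ≤ a)) :
    majVec a b c = b :=
  funext fun i => maj_eq_of_between <| h.imp (fun h => ⟨h.1 i, h.2 i⟩) (fun h => ⟨h.1 i, h.2 i⟩)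

theorem IsChain.isMajClosed {S : Set (ι → Bool)} (hS : IsChain (· ≤ ·) S) : IsMajClosed S := by
  intro a ha b hb c hc
  rcases hS.total ha hb with hab | hba <;> rcases hS.total hb hc with hbc | hcb
  · rwa [majVec_eq_of_between (.inl ⟨hab, hbc⟩)]
  · rcases hS.total ha hc with hac | hca
    · rwa [majVec_swap_right, majVec_eq_of_between (.inl ⟨hac, hcb⟩)]
    · rwa [majVec_swap_left, majVec_eq_of_between (.inr ⟨hca, hab⟩)]
  · rcases hS.total ha hc with hac | hca
    · rwa [majVec_swap_left, majVec_eq_of_between (.inl ⟨hba, hac⟩)]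
    · rwa [majVec_swap_right, majVec_eq_of_between (.inr ⟨hbc, hca⟩)]
  · rwa [majVec_eq_of_between (.inr ⟨hcb, hba⟩)]

end Vectors

namespace Reach

variable {ι : Type*} [Fintype ι] {S : Set (ι → Bool)} {a b c : ι → Bool}

theorem of_adj (ha : a ∈ S) (hb : b ∈ S) (hab : hammingDist a b = 1) : Reach S a b :=
  .single ⟨ha, hb, hab⟩

theorem symm (h : Reach S a b) : Reach S b a :=
  have : Std.Symm fun u v : ι → Bool => u ∈ S ∧ v ∈ S ∧ hammingDist u v = 1 :=
    ⟨fun u v ⟨hu, hv, huv⟩ => ⟨hv, hu, hammingDist_comm u v ▸ huv⟩⟩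
  Relation.ReflTransGen.stdSymm.symm _ _ h

theorem trans (hab : Reach S a b) (hbc : Reach S b c) : Reach S a c :=
  Relation.ReflTransGen.trans hab hbc

theorem of_forall_reach_from {T : Set (ι → Bool)} (hc : ∀ t ∈ T, Reach S c t) :
    ∀ a ∈ T, ∀ b ∈ T, Reach S a b :=
  fun a ha b hb => (hc a ha).symm.trans (hc b hb)

theorem notMem_of_two_le_hammingDist {A B : Set (ι → Bool)}
    (hAB : ∀ u ∈ A, ∀ v ∈ B, 2 ≤ hammingDist u v) (h : Reach (A ∪ B) a b) (ha : a ∈ A) :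
    b ∉ B := by
  have hbA : b ∈ A := by
    induction h with
    | refl => exact ha
    | tail _ hstep ih =>
      obtain ⟨-, hv, huv⟩ := hstep
      exact hv.resolve_right fun hvB => by have := hAB _ ih _ hvB; omega
  intro hbB
  simpa using hAB b hbA b hbB

end Reach

theorem componentwise_maj_not_preserved_by_identification :
    let S1 : Set (Fin 4 → Bool) :=
      {![false,false,false,false], ![false,true,false,false], ![true,true,false,false]}
    let S2 : Set (Fin 4 → Bool) :=
      {![false,false,true,true], ![true,false,true,true]}
    let R : Set (Fin 4 → Bool) := S1 ∪ S2
    let R' : Set (Fin 3 → Bool) := {p | (![p 0, p 1, p 2, p 2] : Fin 4 → Bool) ∈ R}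
    -- S1 and S2 are the connected components of G(R):
    ((∀ a ∈ S1, ∀ b ∈ S1, Reach R a b) ∧ (∀ a ∈ S2, ∀ b ∈ S2, Reach R a b) ∧
      (∀ a ∈ S1, ∀ b ∈ S2, ¬ Reach R a b)) ∧
    -- each component is closed under coordinate-wise MAJ:
    ((∀ a ∈ S1, ∀ b ∈ S1, ∀ c ∈ S1, (fun i => maj (a i) (b i) (c i)) ∈ S1) ∧
      (∀ a ∈ S2, ∀ b ∈ S2, ∀ c ∈ S2, (fun i => maj (a i) (b i) (c i)) ∈ S2)) ∧
    -- but R' has a connected component (containing 110, 000, 101) not closed under MAJ: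
    ((![true,true,false] : Fin 3 → Bool) ∈ R' ∧ (![false,false,false] : Fin 3 → Bool) ∈ R' ∧
      (![true,false,true] : Fin 3 → Bool) ∈ R' ∧
      Reach R' ![true,true,false] ![false,false,false] ∧
      Reach R' ![false,false,false] ![true,false,true] ∧
      (fun i => maj ((![true,true,false] : Fin 3 → Bool) i)
        ((![false,false,false] : Fin 3 → Bool) i)
        ((![true,false,true] : Fin 3 → Bool) i)) ∉ R') := by
  intro S1 S2 R R'
  have hS1 : IsChain (· ≤ ·) S1 := by
    rintro x (rfl | rfl | rfl) y (rfl | rfl | rfl) _ <;> simp only [Pi.le_def] <;> decide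
  have hS2 : IsChain (· ≤ ·) S2 := by
    rintro x (rfl | rfl) y (rfl | rfl) _ <;> simp only [Pi.le_def] <;> decide
  have hsep : ∀ u ∈ S1, ∀ v ∈ S2, 2 ≤ hammingDist u v := by
    rintro u (rfl | rfl | rfl) v (rfl | rfl) <;> decide
  refine ⟨⟨Reach.of_forall_reach_from (c := ![false,true,false,false]) ?_,
    Reach.of_forall_reach_from (c := ![false,false,true,true]) ?_,
    fun a ha b hb h => Reach.notMem_of_two_le_hammingDist hsep h ha hb⟩,
    ⟨hS1.isMajClosed, hS2.isMajClosed⟩, ?_⟩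
  · rintro t (rfl | rfl | rfl)
    · exact .of_adj (by simp [R, S1]) (by simp [R, S1]) (by decide)
    · exact .refl
    · exact .of_adj (by simp [R, S1]) (by simp [R, S1]) (by decide)
  · rintro t (rfl | rfl)
    · exact .refl
    · exact .of_adj (by simp [R, S2]) (by simp [R, S2]) (by decide)
  have h110 : ![true,true,false] ∈ R' := by simp [R', R, S1]
  have h010 : ![false,true,false] ∈ R' := by simp [R', R, S1]
  have h000 : ![false,false,false] ∈ R' := by simp [R', R, S1]
  have h001 : ![false,false,true] ∈ R' := by simp [R', R, S2]
  have h101 : ![true,false,true] ∈ R' := by simp [R', R, S2]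
  refine ⟨h110, h000, h101, ?_, ?_, ?_⟩
  · exact (Reach.of_adj h110 h010 (by decide)).trans (.of_adj h010 h000 (by decide))
  · exact (Reach.of_adj h000 h001 (by decide)).trans (.of_adj h001 h101 (by decide))
  · show ![true, false, false, false] ∉ R
    simp [R, S1, S2]
end

section
/- Let R₁ and R₂ be two connected components of the solution graph of a Horn relation R, with coordinate-wise minimum solutions u and v respectively, and let U, V be the sets of 1-coordinates of u and v. If U ⊊ V, then no vector a ∈ R₁ has all coordinates in V equal to 1. -/
/-! Meeting with `v` is a Horn-closed operation that does not increase Hamming distance, so it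
maps the path from `u` to `a` inside the component of `u` to a path from `u ⊓ v` to `a ⊓ v`.
If `u ≤ v ≤ a`, these endpoints are `u` and `v`, so `v` would lie in the component of `u`. -/

namespace Reach

variable {ι : Type*} [Fintype ι] {S : Set (ι → Bool)}

theorem map {f : (ι → Bool) → ι → Bool} (hS : ∀ x ∈ S, f x ∈ S)
    (hf : ∀ x y, hammingDist (f x) (f y) ≤ hammingDist x y) {x y : ι → Bool}
    (h : Reach S x y) : Reach S (f x) (f y) := by
  induction h with
  | refl => exact .refl
  | tail _ hstep ih =>
    obtain ⟨hb, hc, hdist⟩ := hstep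
    rcases Nat.le_one_iff_eq_zero_or_eq_one.mp (hdist ▸ hf _ _) with h0 | h1
    · rwa [← eq_of_hammingDist_eq_zero h0]
    · exact ih.tail ⟨hS _ hb, hS _ hc, h1⟩

theorem inf_right (hS : ∀ a ∈ S, ∀ b ∈ S, a ⊓ b ∈ S) {v x y : ι → Bool} (hv : v ∈ S)
    (h : Reach S x y) : Reach S (x ⊓ v) (y ⊓ v) :=
  h.map (f := (· ⊓ v)) (fun x hx => hS x hx v hv)
    (fun _ _ => hammingDist_comp_le_hammingDist fun i b => b && v i)

end Reach

theorem horn_component_minima_strict_subset_general (n : ℕ) (R : Set (Fin n → Bool))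
    (hHorn : ∀ a ∈ R, ∀ b ∈ R, (fun i => a i && b i) ∈ R)
    (u v : Fin n → Bool) (hv : v ∈ R)
    -- the components are distinct
    (hdiff : ¬ Reach R u v)
    -- U ⊊ V
    (hUV : {i | u i = true} ⊂ {i | v i = true}) :
    ∀ a ∈ R, Reach R u a → ¬ (∀ i, v i = true → a i = true) := by
  intro a _ hua hall
  have huv : u ≤ v := fun i => Bool.le_iff_imp.mpr fun hi => hUV.1 hi
  have hva : v ≤ a := fun i => Bool.le_iff_imp.mpr (hall i)
  have hmeet := hua.inf_right hHorn hv
  rw [inf_eq_left.mpr huv, inf_eq_right.mpr hva] at hmeet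
  exact hdiff hmeet

theorem horn_component_minima_strict_subset (n : ℕ) (R : Set (Fin n → Bool))
    (hHorn : ∀ a ∈ R, ∀ b ∈ R, (fun i => a i && b i) ∈ R)
    (u v : Fin n → Bool) (hu : u ∈ R) (hv : v ∈ R)
    -- u and v are the minimum solutions of their respective components
    (huMin : ∀ b ∈ R, Reach R u b → u ≤ b)
    (hvMin : ∀ b ∈ R, Reach R v b → v ≤ b)
    -- the components are distinct
    (hdiff : ¬ Reach R u v)
    -- U ⊊ V
    (hUV : {i | u i = true} ⊂ {i | v i = true}) :
    ∀ a ∈ R, Reach R u a → ¬ (∀ i, v i = true → a i = true) :=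
  horn_component_minima_strict_subset_general n R hHorn u v hv hdiff hUV
end

section
/- The solution graph of the 4-variable formula φ = (x₁∨¬x₂∨¬x₃)∧(x₂∨¬x₃∨¬x₄)∧(x₃∨¬x₄∨¬x₁)∧(x₄∨¬x₁∨¬x₂) is disconnected, but for each of the four 3-element subsets of the variables, the projection of the solution set onto that subset has a connected solution graph. -/
def Connected {ι : Type*} [Fintype ι] (S : Set (ι → Bool)) : Prop :=
  ∀ a ∈ S, ∀ b ∈ S, Reach S a b

section Hypercube

variable {ι : Type*} [Fintype ι] {S : Set (ι → Bool)}

theorem reach_symm {a b : ι → Bool} (h : Reach S a b) : Reach S b a := by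
  induction h with
  | refl => exact Relation.ReflTransGen.refl
  | tail _ hstep ih =>
    exact Relation.ReflTransGen.head
      ⟨hstep.2.1, hstep.1, (hammingDist_comm _ _).trans hstep.2.2⟩ ih

theorem reach_of_forall_exists_closer (hub : ι → Bool)
    (H : ∀ v ∈ S, v ≠ hub →
      ∃ w ∈ S, hammingDist v w = 1 ∧ hammingDist w hub < hammingDist v hub)
    {a : ι → Bool} (ha : a ∈ S) : Reach S a hub := by
  induction hd : hammingDist a hub using Nat.strong_induction_on generalizing a with
  | _ n ih =>
    by_cases hhub : a = hub
    · exact hhub ▸ Relation.ReflTransGen.refl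
    obtain ⟨w, hw, hstep, hcloser⟩ := H a ha hhub
    exact Relation.ReflTransGen.head ⟨ha, hw, hstep⟩ (ih _ (hd ▸ hcloser) hw rfl)

theorem connected_of_forall_exists_closer (hub : ι → Bool)
    (H : ∀ v ∈ S, v ≠ hub →
      ∃ w ∈ S, hammingDist v w = 1 ∧ hammingDist w hub < hammingDist v hub) :
    Connected S := fun _ ha _ hb =>
  (reach_of_forall_exists_closer hub H ha).trans
    (reach_symm (reach_of_forall_exists_closer hub H hb))

theorem eq_of_reach_of_isolated {a b : ι → Bool} (hb : ∀ u ∈ S, hammingDist u b ≠ 1)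
    (h : Reach S a b) : a = b := by
  cases h with
  | refl => rfl
  | tail _ hstep => exact absurd hstep.2.2 (hb _ hstep.1)

theorem not_connected_of_isolated {a b : ι → Bool} (ha : a ∈ S) (hb : b ∈ S) (hab : a ≠ b)
    (hiso : ∀ u ∈ S, hammingDist u b ≠ 1) : ¬ Connected S :=
  fun hconn => hab (eq_of_reach_of_isolated hiso (hconn a ha b hb))

end Hypercube

theorem four_clause_formula_disconnected_but_all_three_var_projections_connected :
    -- variables (x₁,x₂,x₃,x₄) = (s 0, s 1, s 2, s 3)
    let S : Set (Fin 4 → Bool) := {s |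
      ((s 0 || !s 1 || !s 2) && (s 1 || !s 2 || !s 3) &&
       (s 2 || !s 3 || !s 0) && (s 3 || !s 0 || !s 1)) = true}
    -- projection dropping the j-th variable (keeping the other three, in order)
    let P : Fin 4 → Set (Fin 3 → Bool) :=
      fun j => {p | ∃ s ∈ S, ∀ k : Fin 3, p k = s (j.succAbove k)}
    ¬ Connected S ∧ ∀ j : Fin 4, Connected (P j) := by
  intro S P
  constructor
  · have hzero : (fun _ => false) ∈ S := by decide
    have hone : (fun _ => true) ∈ S := by decide
    have hone_isolated : ∀ u ∈ S, hammingDist u (fun _ => true) ≠ 1 := by decide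
    exact not_connected_of_isolated hzero hone (by decide) hone_isolated
  · intro j
    refine connected_of_forall_exists_closer (fun _ => false) ?_
    fin_cases j <;> decide
end

section
/- For the relation R = {1100, 1010, 1110, 0001} ⊆ {0,1}⁴, the relation (x≠y) = {01,10} equals R(x,x,x,y) (identification of variables), but {01,10} cannot be obtained from R by substitution of constants alone, nor as a conjunction of relations obtained from R by substitution of constants. -/
/-!
R is closed under the pointwise `∨` of two tuples at Hamming distance at most 2
(the only nontrivial instance is `1100 ∨ 1010 = 1110`). Substituting constants, with each
of the two variables occurring at most once, produces tuples that differ only in the (at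
most two) variable positions, so every relation obtained from R this way is closed under
`∨`, and so is every intersection of such relations. Disequality is not: `10 ∨ 01 = 11`.
-/

/-- The binary disequality relation {01, 10}. -/
def NeqRel : Set (Fin 2 → Bool) := {x | x 0 ≠ x 1}

/-- Substitution of constants turning a 4-ary relation into a binary relation:
each position gets a variable or a constant, each variable used at most once. -/
def subst42 (ξ : Fin 4 → (Fin 2 ⊕ Bool)) (R : Set (Fin 4 → Bool)) : Set (Fin 2 → Bool) :=
  {x | (fun i => Sum.elim x id (ξ i)) ∈ R}

def InjOnVars (ξ : Fin 4 → (Fin 2 ⊕ Bool)) : Prop :=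
  ∀ i i' j, ξ i = Sum.inl j → ξ i' = Sum.inl j → i = i'

def SupClosedWithinHammingDist {ι : Type*} [Fintype ι] (k : ℕ) (R : Set (ι → Bool)) : Prop :=
  ∀ ⦃a⦄, a ∈ R → ∀ ⦃b⦄, b ∈ R → hammingDist a b ≤ k → a ⊔ b ∈ R

lemma hammingDist_subst_le_two {ξ : Fin 4 → Fin 2 ⊕ Bool} (hξ : InjOnVars ξ) (x y : Fin 2 → Bool) :
    hammingDist (fun i => Sum.elim x id (ξ i)) (fun i => Sum.elim y id (ξ i)) ≤ 2 := by
  let var : Fin 4 → Fin 2 := fun i => Sum.elim id (fun _ => 0) (ξ i)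
  have hvar : ∀ i, Sum.elim x id (ξ i) ≠ Sum.elim y id (ξ i) → ξ i = .inl (var i) := by
    intro i hi
    cases h : ξ i <;> simp_all [var]
  calc hammingDist _ _ ≤ Fintype.card (Fin 2) := by
        refine Finset.card_le_card_of_injOn var (fun _ _ => Finset.mem_univ _) ?_
        intro i hi i' hi' he
        simp only [Finset.coe_filter, Finset.mem_univ, true_and, Set.mem_ofPred_eq] at hi hi'
        exact hξ i i' _ (hvar i hi) (he ▸ hvar i' hi')
    _ = 2 := Fintype.card_fin 2

lemma supClosed_subst42 {ξ : Fin 4 → Fin 2 ⊕ Bool} (hξ : InjOnVars ξ) {R : Set (Fin 4 → Bool)}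
    (hR : SupClosedWithinHammingDist 2 R) : SupClosed (subst42 ξ R) := by
  intro x hx y hy
  have hsup : (fun i => Sum.elim (x ⊔ y) id (ξ i)) =
      (fun i => Sum.elim x id (ξ i)) ⊔ (fun i => Sum.elim y id (ξ i)) := by
    funext i
    simp only [Pi.sup_apply]
    cases ξ i <;> simp
  show _ ∈ R
  rw [hsup]
  exact hR hx hy (hammingDist_subst_le_two hξ x y)

def rel4 : Set (Fin 4 → Bool) :=
  {![true,true,false,false], ![true,false,true,false],
   ![true,true,true,false], ![false,false,false,true]}

lemma supClosedWithinHammingDist_rel4 : SupClosedWithinHammingDist 2 rel4 := by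
  unfold SupClosedWithinHammingDist
  simp only [rel4, Set.mem_insert_iff, Set.mem_singleton_iff]
  decide

lemma setOf_identify_rel4_eq_neqRel :
    {p : Fin 2 → Bool | (![p 0, p 0, p 0, p 1] : Fin 4 → Bool) ∈ rel4} = NeqRel := by
  ext p
  simp only [rel4, NeqRel, Set.mem_ofPred_eq, Set.mem_insert_iff, Set.mem_singleton_iff]
  cases p 0 <;> cases p 1 <;> decide

lemma not_supClosed_neqRel : ¬ SupClosed NeqRel := fun h =>
  h (a := ![true, false]) (by simp [NeqRel]) (b := ![false, true]) (by simp [NeqRel]) (by decide)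

theorem neq_by_identification_not_by_constants :
    let R : Set (Fin 4 → Bool) :=
      {![true,true,false,false], ![true,false,true,false],
       ![true,true,true,false], ![false,false,false,true]}
    -- (x ≠ y) = R(x,x,x,y)
    {p : Fin 2 → Bool | (![p 0, p 0, p 0, p 1] : Fin 4 → Bool) ∈ R} = NeqRel ∧
    -- but (x ≠ y) is not obtainable from R by substitution of constants alone
    (∀ ξ : Fin 4 → (Fin 2 ⊕ Bool), InjOnVars ξ → subst42 ξ R ≠ NeqRel) ∧
    -- nor as a conjunction (intersection) of relations obtained from R
    -- by substitution of constants
    ¬ ∃ F : Set (Set (Fin 2 → Bool)),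
        (∀ T ∈ F, ∃ ξ : Fin 4 → (Fin 2 ⊕ Bool), InjOnVars ξ ∧ T = subst42 ξ R) ∧
        ⋂₀ F = NeqRel := by
  refine ⟨setOf_identify_rel4_eq_neqRel, fun ξ hξ h => ?_, fun ⟨F, hF, hInter⟩ => ?_⟩
  · exact not_supClosed_neqRel (h ▸ supClosed_subst42 hξ supClosedWithinHammingDist_rel4)
  · refine not_supClosed_neqRel (hInter ▸ supClosed_sInter fun T hT => ?_)
    obtain ⟨ξ, hξ, rfl⟩ := hF T hT
    exact supClosed_subst42 hξ supClosedWithinHammingDist_rel4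
end
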